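/- Let x be a positive light-like vector and y a unit space-like vector with x∘y < 0, and set e^h = -x∘y. The curve γ(t) = e^{-h}·cosh t·x + e^{-t}·y satisfies γ(t)∘γ(t) = -1 and γ''(t) = γ(t) for all t, γ(0)∘y = 0 (so γ(0) lies on the polar hyperplane of y), and γ'(0)∘y = -1, so γ meets the polar hyperplane of y orthogonally. -/

import Mathlib

/-!
Both `cosh t` and `exp (-t)` are fixed by `d²/dt²`, hence so is `γ`. Since `x∘x = 0`, `y∘y = 1`
and `e^{-h} (x∘y) = -1`, the Lorentzian square of `γ t` is `e^{-2t} - 2 cosh t · e^{-t} = -1`.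
-/

/-- The Lorentzian inner product on `ℝ^{n+1}`. -/
def lprod {n : ℕ} (x y : Fin (n + 1) → ℝ) : ℝ :=
  -(x 0 * y 0) + ∑ i : Fin n, x i.succ * y i.succ

open Real

section Lorentz

variable {n : ℕ}

theorem lprod_comm (x y : Fin (n + 1) → ℝ) : lprod x y = lprod y x := by
  simp only [lprod, mul_comm]

theorem lprod_smul_add_smul_left (a b : ℝ) (x y z : Fin (n + 1) → ℝ) :
    lprod (a • x + b • y) z = a * lprod x z + b * lprod y z := by
  simp only [lprod, Pi.add_apply, Pi.smul_apply, smul_eq_mul, add_mul, mul_assoc,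
    Finset.sum_add_distrib, ← Finset.mul_sum]
  ring

theorem lprod_smul_add_smul_self (a b : ℝ) (x y : Fin (n + 1) → ℝ) :
    lprod (a • x + b • y) (a • x + b • y) =
      a ^ 2 * lprod x x + 2 * a * b * lprod x y + b ^ 2 * lprod y y := by
  rw [lprod_smul_add_smul_left, lprod_comm x, lprod_comm y, lprod_smul_add_smul_left,
    lprod_smul_add_smul_left, lprod_comm y x]
  ring

end Lorentz

section Curve

variable {E : Type*} [NormedAddCommGroup E] [NormedSpace ℝ E]

theorem hasDerivAt_cosh_smul_add_exp_neg_smul (c : ℝ) (x y : E) (t : ℝ) :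
    HasDerivAt (fun t => (c * cosh t) • x + exp (-t) • y)
      ((c * sinh t) • x - exp (-t) • y) t := by
  have hexp : HasDerivAt (fun t => exp (-t)) (-exp (-t)) t := by
    simpa using (hasDerivAt_neg t).exp
  simpa [sub_eq_add_neg] using
    (((hasDerivAt_cosh t).const_mul c).smul_const x).fun_add (hexp.smul_const y)

theorem hasDerivAt_sinh_smul_sub_exp_neg_smul (c : ℝ) (x y : E) (t : ℝ) :
    HasDerivAt (fun t => (c * sinh t) • x - exp (-t) • y)
      ((c * cosh t) • x + exp (-t) • y) t := by
  have hexp : HasDerivAt (fun t => exp (-t)) (-exp (-t)) t := by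
    simpa using (hasDerivAt_neg t).exp
  simpa using (((hasDerivAt_sinh t).const_mul c).smul_const x).fun_sub (hexp.smul_const y)

theorem deriv_cosh_smul_add_exp_neg_smul (c : ℝ) (x y : E) :
    deriv (fun t => (c * cosh t) • x + exp (-t) • y) =
      fun t => (c * sinh t) • x - exp (-t) • y :=
  funext fun t => (hasDerivAt_cosh_smul_add_exp_neg_smul c x y t).deriv

theorem deriv_deriv_cosh_smul_add_exp_neg_smul (c : ℝ) (x y : E) :
    deriv (deriv fun t => (c * cosh t) • x + exp (-t) • y) =
      fun t => (c * cosh t) • x + exp (-t) • y := by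
  rw [deriv_cosh_smul_add_exp_neg_smul]
  exact funext fun t => (hasDerivAt_sinh_smul_sub_exp_neg_smul c x y t).deriv

end Curve

theorem perpendicular_geodesic_to_polar_general {n : ℕ} (x y : Fin (n + 1) → ℝ)
    (hxx : lprod x x = 0)
    (hyy : lprod y y = 1)
    (h : ℝ) (hh : Real.exp h = -lprod x y)
    (γ : ℝ → (Fin (n + 1) → ℝ))
    (hγ : ∀ t, γ t = (Real.exp (-h) * Real.cosh t) • x + Real.exp (-t) • y) :
    (∀ t, lprod (γ t) (γ t) = -1) ∧
    (∀ t, deriv (deriv γ) t = γ t) ∧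
    lprod (γ 0) y = 0 ∧
    lprod (deriv γ 0) y = -1 := by
  obtain rfl : γ = fun t => (exp (-h) * cosh t) • x + exp (-t) • y := funext hγ
  have hxy : lprod x y = -exp h := by linarith
  have hh' : exp (-h) * exp h = 1 := by rw [← exp_add, neg_add_cancel, exp_zero]
  refine ⟨fun t => ?_, fun t => ?_, ?_, ?_⟩
  · have ht : exp t * exp (-t) = 1 := by rw [← exp_add, add_neg_cancel, exp_zero]
    rw [lprod_smul_add_smul_self, hxx, hyy, hxy, cosh_eq]
    linear_combination (-(exp t * exp (-t)) - exp (-t) ^ 2) * hh' - ht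
  · rw [deriv_deriv_cosh_smul_add_exp_neg_smul]
  · simp only [cosh_zero, neg_zero, exp_zero, lprod_smul_add_smul_left, hyy, hxy]
    linear_combination -hh'
  · simp only [deriv_cosh_smul_add_exp_neg_smul, sinh_zero, neg_zero, exp_zero, sub_eq_add_neg,
      ← neg_smul, lprod_smul_add_smul_left, hyy]
    ring

/-- The geodesic perpendicular to the polar hyperplane of `y` in the direction
of the ideal point of `x`. -/
theorem perpendicular_geodesic_to_polar {n : ℕ} (x y : Fin (n + 1) → ℝ)
    (hxx : lprod x x = 0) (hx0 : 0 < x 0)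
    (hyy : lprod y y = 1) (hxy : lprod x y < 0)
    (h : ℝ) (hh : Real.exp h = -lprod x y)
    (γ : ℝ → (Fin (n + 1) → ℝ))
    (hγ : ∀ t, γ t = (Real.exp (-h) * Real.cosh t) • x + Real.exp (-t) • y) :
    (∀ t, lprod (γ t) (γ t) = -1) ∧
    (∀ t, deriv (deriv γ) t = γ t) ∧
    lprod (γ 0) y = 0 ∧
    lprod (deriv γ 0) y = -1 :=
  perpendicular_geodesic_to_polar_general x y hxx hyy h hh γ hγ
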